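/- Let α₁, α₂, f₁, f₂ be indeterminates over ℂ. Define automorphisms s₁, s₂ of ℂ(α₁,α₂,f₁,f₂) by: s₁(α₁) = -α₁, s₁(α₂) = α₂ + α₁, s₁(f₁) = f₁, s₁(f₂) = f₂ + α₁/f₁; and s₂(α₂) = -α₂, s₂(α₁) = α₁ + α₂, s₂(f₂) = f₂, s₂(f₁) = f₁ - α₂/f₂. Then s₁ and s₂ satisfy the braid relation of A₂: (s₁ s₂)³ = id. -/

import Mathlib

/-!
Let `E = s₁ s₂`. On the roots `E` acts by `α₁ ↦ α₂ ↦ -α₁ - α₂`, a rotation of order three.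
The product `g = f₁ f₂` satisfies `E g = g - α₂`, so its orbit `g ↦ g - α₂ ↦ g + α₁ ↦ g` also
has length three, and `E f₁ · E² g = f₁ · E g`. Applying `E` twice to this relation and
telescoping gives `E³ f₁ = f₁`, hence `E³ f₂ = E³ (g / f₁) = f₂`. A `ℂ`-algebra endomorphism of
`ℂ(α₁, α₂, f₁, f₂)` fixing the four generators is the identity.
-/

/-- The field ℂ(α₁, α₂, f₁, f₂) of rational functions in four indeterminates. -/
noncomputable abbrev K : Type := FractionRing (MvPolynomial (Fin 4) ℂ)

/-- Generators: `gen 0 = α₁`, `gen 1 = α₂`, `gen 2 = f₁`, `gen 3 = f₂`. -/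
noncomputable def gen (i : Fin 4) : K :=
  algebraMap (MvPolynomial (Fin 4) ℂ) K (MvPolynomial.X i)

theorem iterate_three_eq_of_mul_eq {F G : Type*} [Field F] [FunLike G F F] [RingHomClass G F F]
    {E : G} {f g : F}
    (hg : E (E (E g)) = g) (hf : E f * E (E g) = f * E g) (hEg : E g ≠ 0) :
    E (E (E f)) = f := by
  have h₂ : E (E f) * E (E (E g)) = f * E g := by
    have := congrArg E hf
    rwa [map_mul, map_mul, hf] at this
  have h₃ : E (E (E f)) * E g = f * E g := by
    have := congrArg E h₂
    rwa [map_mul, map_mul, hg, hf] at this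
  exact mul_right_cancel₀ hEg h₃

namespace NoumiYamada

variable {F G : Type*} [Field F] [FunLike G F F] [RingHomClass G F F] {a₁ a₂ f₁ f₂ : F}

section Reflections

variable {s₁ s₂ : G}

theorem coxeter_root₁ (h1a1 : s₁ a₁ = -a₁) (h1a2 : s₁ a₂ = a₂ + a₁) (h2a1 : s₂ a₁ = a₁ + a₂) :
    s₁ (s₂ a₁) = a₂ := by
  rw [h2a1, map_add, h1a1, h1a2]; ring

theorem coxeter_root₂ (h1a2 : s₁ a₂ = a₂ + a₁) (h2a2 : s₂ a₂ = -a₂) :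
    s₁ (s₂ a₂) = -a₁ - a₂ := by
  rw [h2a2, map_neg, h1a2]; ring

theorem coxeter_f₁_mul (hf₁ : f₁ ≠ 0) (hg : f₁ * f₂ + a₁ ≠ 0)
    (h1a2 : s₁ a₂ = a₂ + a₁) (h1f1 : s₁ f₁ = f₁) (h1f2 : s₁ f₂ = f₂ + a₁ / f₁)
    (h2f1 : s₂ f₁ = f₁ - a₂ / f₂) :
    s₁ (s₂ f₁) * (f₁ * f₂ + a₁) = f₁ * (f₁ * f₂ - a₂) := by
  have hf₂ : f₂ + a₁ / f₁ ≠ 0 := by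
    rw [add_div' _ _ _ hf₁, mul_comm]
    exact div_ne_zero hg hf₁
  rw [h2f1, map_sub, map_div₀, h1f1, h1a2, h1f2]
  field_simp
  ring

end Reflections

variable {E : G}

theorem iterate_three_root₁ (h₁ : E a₁ = a₂) (h₂ : E a₂ = -a₁ - a₂) :
    E (E (E a₁)) = a₁ := by
  rw [h₁, h₂, map_sub, map_neg, h₁, h₂]; ring

theorem iterate_three_root₂ (h₁ : E a₁ = a₂) (h₂ : E a₂ = -a₁ - a₂) :
    E (E (E a₂)) = a₂ := by
  rw [h₂, map_sub, map_neg, h₁, h₂, map_sub, map_neg, map_sub, map_neg, h₁, h₂]; ring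

theorem apply_f₁_mul_f₂ (hf₁ : f₁ ≠ 0) (hEf₁ : E f₁ * (f₁ * f₂ + a₁) = f₁ * (f₁ * f₂ - a₂))
    (hEf₂ : E f₂ = f₂ + a₁ / f₁) :
    E (f₁ * f₂) = f₁ * f₂ - a₂ := by
  rw [map_mul, hEf₂, ← mul_right_inj' hf₁, ← hEf₁]
  field_simp

theorem apply_apply_of_apply_eq_sub {g : F} (h₂ : E a₂ = -a₁ - a₂)
    (hg : E g = g - a₂) : E (E g) = g + a₁ := by
  rw [hg, map_sub, hg, h₂]; ring

theorem iterate_three_of_apply_eq_sub {g : F} (h₁ : E a₁ = a₂) (h₂ : E a₂ = -a₁ - a₂)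
    (hg : E g = g - a₂) : E (E (E g)) = g := by
  rw [apply_apply_of_apply_eq_sub h₂ hg, map_add, hg, h₁]; ring

theorem iterate_three_f₁ (h₁ : E a₁ = a₂) (h₂ : E a₂ = -a₁ - a₂) (hf₁ : f₁ ≠ 0)
    (hg : f₁ * f₂ - a₂ ≠ 0) (hEf₁ : E f₁ * (f₁ * f₂ + a₁) = f₁ * (f₁ * f₂ - a₂))
    (hEf₂ : E f₂ = f₂ + a₁ / f₁) :
    E (E (E f₁)) = f₁ := by
  have hEg := apply_f₁_mul_f₂ hf₁ hEf₁ hEf₂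
  refine iterate_three_eq_of_mul_eq (iterate_three_of_apply_eq_sub h₁ h₂ hEg) ?_ (hEg ▸ hg)
  rwa [apply_apply_of_apply_eq_sub h₂ hEg, hEg]

theorem iterate_three_f₂ (h₁ : E a₁ = a₂) (h₂ : E a₂ = -a₁ - a₂) (hf₁ : f₁ ≠ 0)
    (hg : f₁ * f₂ - a₂ ≠ 0) (hEf₁ : E f₁ * (f₁ * f₂ + a₁) = f₁ * (f₁ * f₂ - a₂))
    (hEf₂ : E f₂ = f₂ + a₁ / f₁) :
    E (E (E f₂)) = f₂ := by
  have hEg := apply_f₁_mul_f₂ hf₁ hEf₁ hEf₂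
  have := iterate_three_of_apply_eq_sub h₁ h₂ hEg
  rw [map_mul, map_mul, map_mul, iterate_three_f₁ h₁ h₂ hf₁ hg hEf₁ hEf₂] at this
  exact mul_left_cancel₀ hf₁ this

end NoumiYamada

theorem algHom_ext_gen {B : Type*} [Semiring B] [Algebra ℂ B] {φ ψ : K →ₐ[ℂ] B}
    (h : ∀ i, φ (gen i) = ψ (gen i)) : φ = ψ := by
  ext i
  exact h i

theorem MvPolynomial.algebraMap_ne_zero_of_eval_ne_zero {σ R L : Type*} [CommRing R]
    [CommRing L] [Algebra (MvPolynomial σ R) L] [IsFractionRing (MvPolynomial σ R) L]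
    {p : MvPolynomial σ R} (v : σ → R) (h : eval v p ≠ 0) :
    algebraMap (MvPolynomial σ R) L p ≠ 0 := by
  rw [map_ne_zero_iff _ (IsFractionRing.injective _ L)]
  rintro rfl
  simp at h

open MvPolynomial NoumiYamada in
/-- the Noumi–Yamada generators of type A₂ satisfy the
Coxeter braid relation $(s₁ s₂)^3 = 1$. -/
theorem stmt1 (s₁ s₂ : K ≃ₐ[ℂ] K)
    (h1a1 : s₁ (gen 0) = -gen 0)
    (h1a2 : s₁ (gen 1) = gen 1 + gen 0)
    (h1f1 : s₁ (gen 2) = gen 2)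
    (h1f2 : s₁ (gen 3) = gen 3 + gen 0 / gen 2)
    (h2a2 : s₂ (gen 1) = -gen 1)
    (h2a1 : s₂ (gen 0) = gen 0 + gen 1)
    (h2f2 : s₂ (gen 3) = gen 3)
    (h2f1 : s₂ (gen 2) = gen 2 - gen 1 / gen 3) :
    ∀ x : K, s₁ (s₂ (s₁ (s₂ (s₁ (s₂ x))))) = x := by
  have hf₁ : gen 2 ≠ 0 := by simp [gen]
  have hg_add : gen 2 * gen 3 + gen 0 ≠ 0 := by
    convert algebraMap_ne_zero_of_eval_ne_zero (L := K)
      (p := (X 2 * X 3 + X 0 : MvPolynomial (Fin 4) ℂ)) ![1, 0, 0, 0] (by simp) using 1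
    simp [gen]
  have hg_sub : gen 2 * gen 3 - gen 1 ≠ 0 := by
    convert algebraMap_ne_zero_of_eval_ne_zero (L := K)
      (p := (X 2 * X 3 - X 1 : MvPolynomial (Fin 4) ℂ)) ![0, 1, 0, 0] (by simp) using 1
    simp [gen]
  let E := s₂.trans s₁
  have h₁ : E (gen 0) = gen 1 := coxeter_root₁ h1a1 h1a2 h2a1
  have h₂ : E (gen 1) = -gen 0 - gen 1 := coxeter_root₂ h1a2 h2a2
  have hEf₂ : E (gen 3) = gen 3 + gen 0 / gen 2 := (congrArg s₁ h2f2).trans h1f2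
  have hEf₁ : E (gen 2) * (gen 2 * gen 3 + gen 0) = gen 2 * (gen 2 * gen 3 - gen 1) :=
    coxeter_f₁_mul hf₁ hg_add h1a2 h1f1 h1f2 h2f1
  have hE : (E.trans (E.trans E) : K →ₐ[ℂ] K) = AlgHom.id ℂ K := by
    refine algHom_ext_gen fun i => ?_
    fin_cases i
    exacts [iterate_three_root₁ h₁ h₂, iterate_three_root₂ h₁ h₂,
      iterate_three_f₁ h₁ h₂ hf₁ hg_sub hEf₁ hEf₂, iterate_three_f₂ h₁ h₂ hf₁ hg_sub hEf₁ hEf₂]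
  exact fun x => AlgHom.congr_fun hE x
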